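/- arXiv:1403.3341 — 4 statements merged into one kernel-verified Lean document; each statement's English description precedes it below -/
import Mathlib

section
/- Let f : [0,1] → X be a continuous surjection onto a compact metric space X, and let μ be a finite (nonnegative) Borel measure on X. Then there exists a finite signed Borel measure μ̃ on [0,1] whose pushforward along f equals μ, i.e. μ̃(f⁻¹(A)) = μ(A) for every Borel set A ⊆ X. -/
/-!
Send each point `x` of `X` to the least point `g x` of its fibre `f ⁻¹' {x}`, which is closed and
hence contains its infimum. Then `f ∘ g = id`, and `g` is Borel because `{x | g x ≤ a}` is the
compact image `f '' Iic a`. So `μ.map g` is a finite positive measure whose pushforward along `f`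
is `μ`.
-/

open MeasureTheory Set

section LeastPreimage

variable {α X : Type*} [CompleteLinearOrder α] [TopologicalSpace α] [OrderTopology α]
  [TopologicalSpace X] {f : α → X}

theorem Continuous.apply_sInf_preimage_singleton [T1Space X] (hf : Continuous f) {x : X}
    (hx : x ∈ range f) : f (sInf (f ⁻¹' {x})) = x :=
  (isClosed_singleton.preimage hf).sInf_mem (preimage_singleton_nonempty.mpr hx)

theorem Continuous.sInf_preimage_singleton_le_iff [T1Space X] (hf : Continuous f) {x : X}
    (hx : x ∈ range f) {a : α} : sInf (f ⁻¹' {x}) ≤ a ↔ x ∈ f '' Iic a := by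
  constructor
  · exact fun h => ⟨_, h, hf.apply_sInf_preimage_singleton hx⟩
  · rintro ⟨t, ht, rfl⟩
    exact (sInf_le (mem_preimage.2 (mem_singleton _))).trans ht

theorem Continuous.measurable_sInf_preimage_singleton [T2Space X] [MeasurableSpace X]
    [OpensMeasurableSpace X] [MeasurableSpace α] [BorelSpace α] [SecondCountableTopology α]
    (hf : Continuous f) (hsurj : Function.Surjective f) :
    Measurable fun x => sInf (f ⁻¹' {x}) := by
  refine measurable_of_Iic fun a => ?_
  have hIic : (fun x => sInf (f ⁻¹' {x})) ⁻¹' Iic a = f '' Iic a :=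
    Set.ext fun x => hf.sInf_preimage_singleton_le_iff (hsurj x)
  rw [hIic]
  exact (isClosed_Iic.isCompact.image hf).isClosed.measurableSet

end LeastPreimage

theorem MeasureTheory.Measure.map_map_of_rightInverse {α β : Type*} [MeasurableSpace α]
    [MeasurableSpace β] {f : α → β} {g : β → α} (hf : Measurable f) (hg : Measurable g)
    (hfg : Function.RightInverse g f) (μ : Measure β) : (μ.map g).map f = μ := by
  rw [Measure.map_map hf hg, hfg.comp_eq_id, Measure.map_id]

theorem exists_lift_measure_along_surjection_general {X : Type*} [MetricSpace X]
    [MeasurableSpace X] [BorelSpace X]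
    (f : unitInterval → X) (hf : Continuous f) (hsurj : Function.Surjective f)
    (μ : Measure X) [IsFiniteMeasure μ] :
    ∃ μt : SignedMeasure unitInterval,
      ∀ A : Set X, MeasurableSet A → μt (f ⁻¹' A) = (μ A).toReal := by
  have hg := hf.measurable_sInf_preimage_singleton hsurj
  have hfg : Function.RightInverse (fun x => sInf (f ⁻¹' {x})) f :=
    fun x => hf.apply_sInf_preimage_singleton (hsurj x)
  refine ⟨(μ.map fun x => sInf (f ⁻¹' {x})).toSignedMeasure, fun A hA => ?_⟩
  rw [Measure.toSignedMeasure_apply_measurable (hA.preimage hf.measurable), measureReal_def,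
    ← Measure.map_apply hf.measurable hA, Measure.map_map_of_rightInverse hf.measurable hg hfg]

/-- Lifting a finite Borel measure along a continuous surjection `[0,1] → X`:
there is a finite signed Borel measure on `[0,1]` pushing forward to `μ`. -/
theorem exists_lift_measure_along_surjection {X : Type*} [MetricSpace X] [CompactSpace X]
    [MeasurableSpace X] [BorelSpace X]
    (f : unitInterval → X) (hf : Continuous f) (hsurj : Function.Surjective f)
    (μ : Measure X) [IsFiniteMeasure μ] :
    ∃ μt : SignedMeasure unitInterval,
      ∀ A : Set X, MeasurableSet A → μt (f ⁻¹' A) = (μ A).toReal :=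
  exists_lift_measure_along_surjection_general f hf hsurj μ
end

section
/- Let X be a path-connected compact metric space that is the continuous image of [0,1] (a Peano continuum), let f : [0,1] → X be a continuous surjection, and let μ be a finite signed Borel measure on X. Define g : [0,1] → C(Δ¹, X) by g(x)(t) = f(tx), and let ν = g μ̃ be the pushforward of a lift μ̃ of μ along f. Then ∂ν = μ − μ(X)·δ_{f(0)}, where ∂ν(A) = ν(∂₀⁻¹A) − ν(∂₁⁻¹A) and ∂₀, ∂₁ : C(Δ¹,X) → X are the endpoint evaluation maps σ ↦ σ(1), σ ↦ σ(0). -/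
open MeasureTheory Classical

/-- For a Peano continuum `X` with continuous surjection `f : [0,1] → X`, a lift `μ̃`
of a finite signed Borel measure `μ` (so that `μ A = μ̃ (f ⁻¹' A)`), and the map
`g : [0,1] → C(Δ¹, X)`, `g(x)(t) = f(tx)`, the pushforward `ν = g μ̃` satisfies
`∂ν = μ - μ(X) · δ_{f(0)}`. -/
theorem boundary_of_cone_chain {X : Type*} [MetricSpace X] [CompactSpace X]
    [PathConnectedSpace X] [MeasurableSpace X] [BorelSpace X]
    (f : C(unitInterval, X)) (hsurj : Function.Surjective f)
    (μt : SignedMeasure unitInterval)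
    (g : unitInterval → C(unitInterval, X))
    (hg : ∀ x t, g x t = f (t * x)) :
    ∀ A : Set X, MeasurableSet A →
      μt (g ⁻¹' ((fun σ : ContinuousMap unitInterval X => σ 1) ⁻¹' A)) -
        μt (g ⁻¹' ((fun σ : ContinuousMap unitInterval X => σ 0) ⁻¹' A))
      = μt (f ⁻¹' A) - μt Set.univ * (if f 0 ∈ A then (1 : ℝ) else 0) := by
  intro A hA
  have h1 : g ⁻¹' ((fun σ : ContinuousMap unitInterval X => σ 1) ⁻¹' A) = f ⁻¹' A := by
    ext x
    simp [Set.mem_preimage, hg x 1, one_mul]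
  have h0 : g ⁻¹' ((fun σ : ContinuousMap unitInterval X => σ 0) ⁻¹' A)
      = if f 0 ∈ A then (Set.univ : Set unitInterval) else ∅ := by
    ext x
    by_cases h : f 0 ∈ A <;> simp [Set.mem_preimage, hg x 0, zero_mul, h]
  rw [h1, h0]
  by_cases h : f 0 ∈ A <;> simp [h]
end

section
/- Let X be a topological space whose path components are Borel sets. Suppose μ is a finite signed Borel measure on C(Δ¹, X) with ∂μ = ν − δ_{x₀}, where ν is a finite signed Borel measure carried by a set X₁ ⊆ X with x₀ ∉ X₁. Then there exists a path in X starting at x₀ and ending at a point of X₁. -/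
open MeasureTheory Classical

/-- If `X` has Borel path components and a finite signed Borel measure `μ` on
`C(Δ¹, X)` satisfies `∂μ = ν - δ_{x₀}` with `ν` carried by `X₁` and `x₀ ∉ X₁`, then
there is a path from `x₀` to a point of `X₁`. -/
theorem exists_path_of_boundary_eq {X : Type*} [TopologicalSpace X]
    [MeasurableSpace X] [BorelSpace X]
    [MeasurableSpace C(unitInterval, X)] [BorelSpace C(unitInterval, X)]
    (hcomp : ∀ x : X, MeasurableSet (pathComponent x))
    (μ : SignedMeasure C(unitInterval, X)) (ν : SignedMeasure X)
    (X₁ : Set X) (x₀ : X) (hx₀ : x₀ ∉ X₁)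
    (hcarrier : ∀ B : Set X, MeasurableSet B → B ⊆ X₁ᶜ → ν B = 0)
    (hbd : ∀ A : Set X, MeasurableSet A →
      μ ((fun σ : ContinuousMap unitInterval X => σ 1) ⁻¹' A) -
        μ ((fun σ : ContinuousMap unitInterval X => σ 0) ⁻¹' A)
      = ν A - (if x₀ ∈ A then (1 : ℝ) else 0)) :
    ∃ x ∈ X₁, Joined x₀ x := by
  by_contra h
  push_neg at h
  have key := hbd (pathComponent x₀) (hcomp x₀)
  have hpre : ((fun σ : ContinuousMap unitInterval X => σ 1) ⁻¹' pathComponent x₀)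
      = ((fun σ : ContinuousMap unitInterval X => σ 0) ⁻¹' pathComponent x₀) := by
    ext σ
    have hσ : Joined (σ 0) (σ 1) := ⟨⟨σ, rfl, rfl⟩⟩
    simp only [Set.mem_preimage, pathComponent, Set.mem_setOf_eq]
    exact ⟨fun h1 => h1.trans hσ.symm, fun h0 => h0.trans hσ⟩
  have hsub : pathComponent x₀ ⊆ X₁ᶜ := by
    intro x hx hx1
    exact h x hx1 hx
  rw [hpre, sub_self, hcarrier _ (hcomp x₀) hsub,
    if_pos (mem_pathComponent_self x₀)] at key
  norm_num at key
end

section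
/- Let N = [-1,1] \ ℚ with the subspace topology, partitioned as N = N₀ ∪ N₁ where every Borel subset of each Nᵢ is Lebesgue null and each Nᵢ has full outer measure. Define set functions μᵢ on the semi-algebra 𝓘ᵢ = {Nᵢ ∩ I : I a semi-closed interval [a,b) ∩ [-1,1]} by μᵢ(Nᵢ ∩ I) = λ(I). Then μᵢ is well-defined and countably additive on 𝓘ᵢ, and hence extends to a Borel measure on Nᵢ (with its subspace Borel σ-algebra). -/
open MeasureTheory

open MeasureTheory Set

lemma aux_key (N : Set ℝ) (hN : N ⊆ Set.Icc (-1 : ℝ) 1)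
    (houter : ∀ U : Set ℝ, MeasurableSet U → N ⊆ U → 2 ≤ volume U) :
    ∃ μ : Measure N, ∀ a b : ℝ, a ≤ b →
        μ ((Subtype.val : N → ℝ) ⁻¹' Set.Ico a b)
          = volume (Set.Ico a b ∩ Set.Icc (-1 : ℝ) 1) := by
  set m : OuterMeasure N := OuterMeasure.comap Subtype.val volume.toOuterMeasure with hm
  have hmap : ∀ s : Set N, m s = volume (Subtype.val '' s) := by
    intro s
    rw [hm, OuterMeasure.comap_apply, Measure.toOuterMeasure_apply]
  have hcar : (Subtype.instMeasurableSpace : MeasurableSpace N) ≤ m.caratheodory := by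
    intro s hs
    obtain ⟨t, ht, rfl⟩ := hs
    rw [OuterMeasure.isCaratheodory_iff_le]
    intro A
    have h1 : (Subtype.val '' (A ∩ Subtype.val ⁻¹' t)) = Subtype.val '' A ∩ t := by
      rw [Set.image_inter Subtype.val_injective, Set.image_preimage_eq_inter_range]
      ext x; simp; tauto
    have h2 : (Subtype.val '' (A \ Subtype.val ⁻¹' t)) = Subtype.val '' A \ t := by
      rw [Set.image_diff Subtype.val_injective, Set.image_preimage_eq_inter_range]
      ext x; simp; tauto
    rw [hmap, hmap, hmap, h1, h2, measure_inter_add_diff _ ht]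
  refine ⟨m.toMeasure hcar, fun a b _ => ?_⟩
  have hmeas : MeasurableSet ((Subtype.val : N → ℝ) ⁻¹' Set.Ico a b) :=
    measurableSet_Ico.preimage measurable_subtype_coe
  rw [toMeasure_apply _ _ hmeas, hmap, Subtype.image_preimage_coe]
  -- now: volume (N ∩ Ico a b) = volume (Ico a b ∩ Icc (-1) 1)  (outer measures)
  set S := N ∩ Set.Ico a b with hS
  refine le_antisymm (measure_mono fun x hx => ⟨hx.2, hN hx.1⟩) ?_
  set M' := toMeasurable volume S ∩ (Set.Ico a b ∩ Set.Icc (-1 : ℝ) 1) with hM'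
  have hM'meas : MeasurableSet M' :=
    (measurableSet_toMeasurable _ _).inter (measurableSet_Ico.inter measurableSet_Icc)
  have hSM' : S ⊆ M' := fun x hx => ⟨subset_toMeasurable _ _ hx, hx.2, hN hx.1⟩
  have hM'le : volume M' ≤ volume S := by
    calc volume M' ≤ volume (toMeasurable volume S) := measure_mono Set.inter_subset_left
    _ = volume S := measure_toMeasurable _
  set D := (Set.Ico a b ∩ Set.Icc (-1 : ℝ) 1) \ M' with hD
  have hDmeas : MeasurableSet D := (measurableSet_Ico.inter measurableSet_Icc).diff hM'meas
  have hDN : ∀ x ∈ N, x ∉ D := by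
    intro x hx hxD
    exact hxD.2 (hSM' ⟨hx, hxD.1.1⟩)
  have hDsub : D ⊆ Set.Icc (-1 : ℝ) 1 := fun x hx => hx.1.2
  have hD0 : volume D = 0 := by
    have hU : N ⊆ Set.Icc (-1 : ℝ) 1 \ D := fun x hx => ⟨hN hx, hDN x hx⟩
    have h2le : 2 ≤ volume (Set.Icc (-1 : ℝ) 1 \ D) :=
      houter _ (measurableSet_Icc.diff hDmeas) hU
    have hsum : volume (Set.Icc (-1 : ℝ) 1 ∩ D) + volume (Set.Icc (-1 : ℝ) 1 \ D)
        = volume (Set.Icc (-1 : ℝ) 1) := measure_inter_add_diff _ hDmeas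
    rw [Set.inter_eq_right.mpr hDsub] at hsum
    have hIcc : volume (Set.Icc (-1 : ℝ) 1) = 2 := by
      rw [Real.volume_Icc]; norm_num
    rw [hIcc] at hsum
    have hle : volume (Set.Icc (-1 : ℝ) 1 \ D) ≤ 2 := by
      rw [← hIcc]; exact measure_mono Set.diff_subset
    have heq : volume (Set.Icc (-1 : ℝ) 1 \ D) = 2 := le_antisymm hle h2le
    rw [heq] at hsum
    have h02 : volume D + 2 = 0 + 2 := by rw [hsum, zero_add]
    exact WithTop.add_right_cancel ENNReal.ofNat_ne_top h02
  calc volume (Set.Ico a b ∩ Set.Icc (-1 : ℝ) 1)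
      ≤ volume (M' ∪ D) := measure_mono fun x hx => by
        by_cases h : x ∈ M'
        · exact Or.inl h
        · exact Or.inr ⟨hx, h⟩
    _ ≤ volume M' + volume D := measure_union_le _ _
    _ = volume M' := by rw [hD0, add_zero]
    _ ≤ volume S := hM'le


/-- Let `N = [-1,1] \ ℚ` be partitioned as `N = N₀ ∪ N₁`, where every Borel subset of
each `Nᵢ` is Lebesgue null and each `Nᵢ` has full outer measure in `[-1,1]`. Then the
set function on the trace of the semi-algebra of semi-closed intervals given by
`μᵢ(Nᵢ ∩ I) = λ(I)` extends to a Borel measure on `Nᵢ`: there are Borel measures `μ₀`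
on `N₀` and `μ₁` on `N₁` assigning to each trace of a semi-closed interval the
Lebesgue measure of that interval. -/
theorem exists_interval_trace_measures (N₀ N₁ : Set ℝ)
    (hpart : N₀ ∪ N₁ = Set.Icc (-1 : ℝ) 1 \ {x : ℝ | ∃ q : ℚ, (q : ℝ) = x})
    (hdisj : Disjoint N₀ N₁)
    (hnull₀ : ∀ C : Set ℝ, MeasurableSet C → C ⊆ N₀ → volume C = 0)
    (hnull₁ : ∀ C : Set ℝ, MeasurableSet C → C ⊆ N₁ → volume C = 0)
    (houter₀ : ∀ U : Set ℝ, MeasurableSet U → N₀ ⊆ U → 2 ≤ volume U)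
    (houter₁ : ∀ U : Set ℝ, MeasurableSet U → N₁ ⊆ U → 2 ≤ volume U) :
    (∃ μ₀ : Measure N₀, ∀ a b : ℝ, a ≤ b →
        μ₀ ((Subtype.val : N₀ → ℝ) ⁻¹' Set.Ico a b)
          = volume (Set.Ico a b ∩ Set.Icc (-1 : ℝ) 1)) ∧
    (∃ μ₁ : Measure N₁, ∀ a b : ℝ, a ≤ b →
        μ₁ ((Subtype.val : N₁ → ℝ) ⁻¹' Set.Ico a b)
          = volume (Set.Ico a b ∩ Set.Icc (-1 : ℝ) 1)) := by
  have hsub : N₀ ∪ N₁ ⊆ Set.Icc (-1 : ℝ) 1 := by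
    rw [hpart]; exact Set.diff_subset
  exact ⟨aux_key N₀ (fun x hx => hsub (Or.inl hx)) houter₀,
    aux_key N₁ (fun x hx => hsub (Or.inr hx)) houter₁⟩
end
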